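/- Fix m > 0 and for each T > 0 let N_T be a Poisson random variable with mean mT. Then for every x ≥ m, lim_{T→∞} (1/T) ln P(N_T ≥ xT) = −( x·ln(x/m) − x + m ). -/

import Mathlib

/-!
The upper bound is Chernoff's: `P(N ≥ a) ≤ exp (-θ a + m (exp θ - 1))` for every `θ ≥ 0`, and the
choice `θ = log (a / m)` gives `exp (-I_m(a))` with `I_m(a) = a log (a / m) - a + m`. Since
`I_{mT}(xT) = T I_m(x)`, this bounds `(1/T) log P(N_T ≥ xT)` by `-I_m(x)` exactly. The lower bound keeps
the single term `k = ⌈xT⌉` of the tail: Stirling's upper bound on `log k!` gives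
`log P(N_T = k) ≥ -T I_m(k/T) - O(log k)`, and `k/T → x`.
-/

open MeasureTheory ProbabilityTheory Filter

/-- `N` is a Poisson random variable with mean `m`. -/
noncomputable def IsPoissonRV {Ω : Type*} [MeasureSpace Ω] (m : ℝ) (N : Ω → ℕ) : Prop :=
  Measurable N ∧
  ∀ k : ℕ, ℙ {ω | N ω = k} = ENNReal.ofReal (Real.exp (-m) * m ^ k / (Nat.factorial k))

open Real Topology Asymptotics
open scoped Nat

namespace Stirling

theorem log_factorial_le_stirling {n : ℕ} (hn : n ≠ 0) :
    log n ! ≤ n * log n - n + log n / 2 + 1 := by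
  obtain ⟨k, rfl⟩ := Nat.exists_eq_succ_of_ne_zero hn
  have hseq : log (stirlingSeq (k + 1)) ≤ log (stirlingSeq 1) :=
    log_le_log (stirlingSeq'_pos k) (stirlingSeq'_antitone (Nat.zero_le k))
  have hn0 : (0 : ℝ) < (k + 1 : ℕ) := by positivity
  rw [log_stirlingSeq_formula, stirlingSeq_one, log_div (exp_pos 1).ne' (by positivity), log_exp,
    log_sqrt zero_le_two, log_mul two_ne_zero hn0.ne', log_div hn0.ne' (exp_pos 1).ne',
    log_exp] at hseq
  linarith

end Stirling

/-- The Cramér rate function of the Poisson law of mean `m`, i.e. the Legendre transform of its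
log-moment generating function `θ ↦ m * (exp θ - 1)`. -/
noncomputable def poissonRate (m y : ℝ) : ℝ := y * log (y / m) - y + m

theorem poissonRate_mul_mul (m y : ℝ) {T : ℝ} (hT : T ≠ 0) :
    poissonRate (m * T) (y * T) = T * poissonRate m y := by
  rw [poissonRate, poissonRate, mul_div_mul_right _ _ hT]
  ring

theorem continuous_poissonRate {m : ℝ} (hm : m ≠ 0) : Continuous (poissonRate m) := by
  have h : poissonRate m = fun y => m * ((y / m) * log (y / m)) - y + m := by
    ext y
    rw [poissonRate, ← mul_assoc, mul_div_cancel₀ _ hm]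
  rw [h]
  have hmul_log := continuous_mul_log
  fun_prop

theorem hasSum_exp_mul_poisson_pmf (m θ a : ℝ) :
    HasSum (fun k : ℕ => exp (θ * (k - a)) * (exp (-m) * m ^ k / k !))
      (exp (-(θ * a) + m * (exp θ - 1))) := by
  have hterm : (fun k : ℕ => exp (θ * (k - a)) * (exp (-m) * m ^ k / k !)) =
      fun k => exp (-(θ * a) - m) * ((m * exp θ) ^ k / k !) := by
    funext k
    rw [mul_pow, ← exp_nat_mul, show θ * (k - a) = k * θ + -(θ * a) by ring, exp_add,
      sub_eq_add_neg, exp_add]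
    ring
  have hexp := NormedSpace.expSeries_div_hasSum_exp (m * exp θ)
  rw [← exp_eq_exp_ℝ] at hexp
  rw [hterm, show -(θ * a) + m * (exp θ - 1) = -(θ * a) - m + m * exp θ by ring, exp_add]
  exact hexp.mul_left _

section PoissonTail

variable {Ω : Type*} [MeasureSpace Ω] {m : ℝ} {N : Ω → ℕ}

theorem IsPoissonRV.tail_le_exp (hN : IsPoissonRV m N) (hm : 0 ≤ m) {θ : ℝ} (hθ : 0 ≤ θ)
    (a : ℝ) : (ℙ {ω | a ≤ (N ω : ℝ)}).toReal ≤ exp (-(θ * a) + m * (exp θ - 1)) := by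
  have hsum := hasSum_exp_mul_poisson_pmf m θ a
  have hterm : ∀ k : ℕ, ℙ {ω | N ω = k ∧ a ≤ (N ω : ℝ)} ≤
      ENNReal.ofReal (exp (θ * (k - a)) * (exp (-m) * m ^ k / k !)) := by
    intro k
    by_cases hk : a ≤ k
    · calc _ ≤ ℙ {ω | N ω = k} := measure_mono fun ω hω => hω.1
        _ = ENNReal.ofReal (exp (-m) * m ^ k / k !) := hN.2 k
        _ ≤ _ := ENNReal.ofReal_le_ofReal (le_mul_of_one_le_left (by positivity)
          (one_le_exp (mul_nonneg hθ (sub_nonneg.2 hk))))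
    · calc _ ≤ ℙ (∅ : Set Ω) :=
          measure_mono fun ω (hω : N ω = k ∧ a ≤ (N ω : ℝ)) => hk (hω.1 ▸ hω.2)
        _ ≤ _ := by rw [measure_empty]; exact zero_le
  have hcover : {ω | a ≤ (N ω : ℝ)} ⊆ ⋃ k : ℕ, {ω | N ω = k ∧ a ≤ (N ω : ℝ)} :=
    fun ω hω => Set.mem_iUnion.2 ⟨N ω, rfl, hω⟩
  refine ENNReal.toReal_le_of_le_ofReal (exp_nonneg _) ?_
  calc ℙ {ω | a ≤ (N ω : ℝ)} ≤ ∑' k : ℕ, ℙ {ω | N ω = k ∧ a ≤ (N ω : ℝ)} :=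
        (measure_mono hcover).trans (measure_iUnion_le _)
    _ ≤ _ := ENNReal.tsum_le_tsum hterm
    _ = _ := by rw [← ENNReal.ofReal_tsum_of_nonneg (fun k => by positivity) hsum.summable,
      hsum.tsum_eq]

theorem IsPoissonRV.tail_le_exp_neg_poissonRate (hN : IsPoissonRV m N) (hm : 0 < m) {a : ℝ}
    (ha : m ≤ a) : (ℙ {ω | a ≤ (N ω : ℝ)}).toReal ≤ exp (-poissonRate m a) := by
  convert hN.tail_le_exp hm.le (log_nonneg ((one_le_div hm).2 ha)) a using 2
  rw [exp_log (div_pos (hm.trans_le ha) hm), poissonRate]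
  field_simp
  ring

variable [IsFiniteMeasure (ℙ : Measure Ω)]

theorem IsPoissonRV.pmf_le_tail (hN : IsPoissonRV m N) {a : ℝ} {k : ℕ} (hk : a ≤ k) :
    exp (-m) * m ^ k / k ! ≤ (ℙ {ω | a ≤ (N ω : ℝ)}).toReal := by
  refine (ENNReal.ofReal_le_iff_le_toReal (measure_ne_top _ _)).1 ?_
  rw [← hN.2 k]
  exact measure_mono fun ω (hω : N ω = k) => show a ≤ (N ω : ℝ) from hω ▸ hk

theorem IsPoissonRV.tail_pos (hN : IsPoissonRV m N) (hm : 0 < m) (a : ℝ) :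
    0 < (ℙ {ω | a ≤ (N ω : ℝ)}).toReal :=
  lt_of_lt_of_le (by positivity) (hN.pmf_le_tail (Nat.le_ceil a))

theorem IsPoissonRV.neg_poissonRate_sub_le_log_tail (hN : IsPoissonRV m N) (hm : 0 < m)
    {a : ℝ} {k : ℕ} (hk0 : k ≠ 0) (hk : a ≤ k) :
    -poissonRate m k - (1 + log k / 2) ≤ log (ℙ {ω | a ≤ (N ω : ℝ)}).toReal := by
  have hk' : (0 : ℝ) < k := by positivity
  calc -poissonRate m k - (1 + log k / 2) ≤ log (exp (-m) * m ^ k / k !) := by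
        rw [log_div (by positivity) (by positivity), log_mul (exp_pos _).ne' (by positivity),
          log_exp, log_pow, poissonRate, log_div hk'.ne' hm.ne']
        linarith [Stirling.log_factorial_le_stirling hk0]
    _ ≤ _ := log_le_log (by positivity) (hN.pmf_le_tail hk)

end PoissonTail

theorem tendsto_log_natCeil_mul_div_atTop {x : ℝ} (hx : 0 < x) :
    Tendsto (fun T : ℝ => log ⌈x * T⌉₊ / T) atTop (𝓝 0) := by
  have hceil : Tendsto (fun T : ℝ => (⌈x * T⌉₊ : ℝ)) atTop atTop :=
    tendsto_natCast_atTop_atTop.comp (tendsto_nat_ceil_atTop.comp (tendsto_id.const_mul_atTop hx))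
  have hO : (fun T : ℝ => (⌈x * T⌉₊ : ℝ)) =O[atTop] id :=
    isBigO_of_div_tendsto_nhds (.of_forall fun T hT => by simp [show T = 0 from hT]) x
      (tendsto_nat_ceil_mul_div_atTop hx.le)
  exact ((isLittleO_log_id_atTop.comp_tendsto hceil).trans_isBigO hO).tendsto_div_nhds_zero

theorem poisson_upper_tail_log_asymptotics
    {Ω : Type*} [MeasureSpace Ω] [IsProbabilityMeasure (ℙ : Measure Ω)]
    (m : ℝ) (hm : 0 < m)
    (N : ℝ → Ω → ℕ) (hN : ∀ T > (0 : ℝ), IsPoissonRV (m * T) (N T))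
    (x : ℝ) (hx : m ≤ x) :
    Filter.Tendsto
      (fun T : ℝ => (1 / T) * Real.log (ℙ {ω | x * T ≤ (N T ω : ℝ)}).toReal)
      Filter.atTop (nhds (-(x * Real.log (x / m) - x + m))) := by
  have hx0 : 0 < x := hm.trans_le hx
  set k : ℝ → ℕ := fun T => ⌈x * T⌉₊
  have hlower : Tendsto (fun T => -poissonRate m (k T / T) - (T⁻¹ + log (k T) / T / 2)) atTop
      (𝓝 (-poissonRate m x)) := by
    simpa using (((continuous_poissonRate hm.ne').tendsto x).comp
      (tendsto_nat_ceil_mul_div_atTop hx0.le)).neg.sub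
      (tendsto_inv_atTop_zero.add ((tendsto_log_natCeil_mul_div_atTop hx0).div_const 2))
  refine tendsto_of_tendsto_of_tendsto_of_le_of_le' hlower tendsto_const_nhds ?_ ?_
  · filter_upwards [eventually_gt_atTop 0] with T hT
    have hk0 : k T ≠ 0 := (Nat.ceil_pos.2 (by positivity)).ne'
    have hscale : poissonRate (m * T) (k T) = T * poissonRate m (k T / T) := by
      rw [← poissonRate_mul_mul _ _ hT.ne', div_mul_cancel₀ _ hT.ne']
    have htail := (hN T hT).neg_poissonRate_sub_le_log_tail (by positivity) hk0 (Nat.le_ceil _)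
    rw [one_div, le_inv_mul_iff₀ hT]
    have hexp : T * (-poissonRate m (k T / T) - (T⁻¹ + log (k T) / T / 2))
        = -poissonRate (m * T) (k T) - (1 + log (k T) / 2) := by
      rw [hscale]; field_simp
    linarith
  · filter_upwards [eventually_gt_atTop 0] with T hT
    have htail := log_le_log ((hN T hT).tail_pos (by positivity) _)
      ((hN T hT).tail_le_exp_neg_poissonRate (by positivity) (mul_le_mul_of_nonneg_right hx hT.le))
    rw [log_exp, poissonRate_mul_mul _ _ hT.ne'] at htail
    rwa [one_div, inv_mul_le_iff₀ hT, mul_neg]
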